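/- arXiv:2105.04803 — 2 statements merged into one kernel-verified Lean document; each statement's English description precedes it below -/
import Mathlib

section
/- Let e(g) = Σ_{i=0}^{s} t_i·2^{t_i−1} + Σ_{i=0}^{s} i·2^{t_i} where g = Σ_{i=0}^{s} 2^{t_i} is the binary expansion with t_0 > t_1 > ... > t_s ≥ 0. Then e(g+1) = e(g) + s + 1; that is, e increases by exactly the number of 1-bits of g when passing from g to g+1. -/
/-- The strictly decreasing list of exponents `t_0 > t_1 > ⋯ > t_s` in the
binary expansion `g = Σ_{i=0}^{s} 2^(t_i)` of `g`. -/
def expList (g : ℕ) : List ℕ :=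
  (((Finset.range (g + 1)).filter (fun k => g.testBit k)).sort (· ≤ ·)).reverse

/-- `e g = Σ_{i=0}^{s} t_i·2^(t_i−1) + Σ_{i=0}^{s} i·2^(t_i)` over the binary
expansion `g = Σ_{i=0}^{s} 2^(t_i)` with `t_0 > t_1 > ⋯ > t_s ≥ 0` (and `e 0 = 0`). -/
def eHL (g : ℕ) : ℕ :=
  ((expList g).zipIdx.map (fun p => p.1 * 2 ^ (p.1 - 1) + p.2 * 2 ^ p.1)).sum

/-! Doubling `g` shifts every exponent up by one, which doubles each term of `e g` and adds
`Σ 2^(t_i) = g`; setting the last bit appends the exponent `0` with index `s + 1`. Hence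
`e (2g) = 2 e g + g` and `e (2g+1) = e (2g) + (s + 1)`, and the theorem follows by induction
on the binary digits of `g`. -/

theorem expList_eq_reverse_bitIndices (g : ℕ) : expList g = g.bitIndices.reverse := by
  rw [expList, List.reverse_inj]
  refine (Finset.sortedLT_sort _).eq_of_mem_iff Nat.bitIndices_sorted fun k => ?_
  simp only [Finset.mem_sort, Finset.mem_filter, Finset.mem_range, Nat.mem_bitIndices,
    and_iff_right_iff_imp]
  intro hk
  have := Nat.two_pow_le_of_mem_bitIndices (Nat.mem_bitIndices.mpr hk)
  have := Nat.lt_two_pow_self (n := k)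
  omega

def eFrom : ℕ → List ℕ → ℕ
  | _, [] => 0
  | i, t :: L => t * 2 ^ (t - 1) + i * 2 ^ t + eFrom (i + 1) L

theorem sum_map_zipIdx_eq_eFrom (L : List ℕ) (i : ℕ) :
    ((L.zipIdx i).map (fun p => p.1 * 2 ^ (p.1 - 1) + p.2 * 2 ^ p.1)).sum = eFrom i L := by
  induction L generalizing i with
  | nil => rfl
  | cons t L ih => simp only [List.zipIdx_cons, List.map_cons, List.sum_cons, ih, eFrom]

theorem eHL_eq_eFrom (g : ℕ) : eHL g = eFrom 0 g.bitIndices.reverse := by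
  rw [eHL, sum_map_zipIdx_eq_eFrom, expList_eq_reverse_bitIndices]

theorem two_mul_mul_two_pow_sub_one (t : ℕ) : 2 * (t * 2 ^ (t - 1)) = t * 2 ^ t := by
  cases t with
  | zero => rfl
  | succ t => rw [Nat.add_sub_cancel, pow_succ]; ring

theorem eFrom_map_succ (L : List ℕ) (i : ℕ) :
    eFrom i (L.map (· + 1)) = 2 * eFrom i L + (L.map (2 ^ ·)).sum := by
  induction L generalizing i with
  | nil => rfl
  | cons t L ih =>
    simp only [List.map_cons, eFrom, ih, List.sum_cons, Nat.add_sub_cancel, pow_succ]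
    linarith [two_mul_mul_two_pow_sub_one t]

theorem eFrom_append_zero (L : List ℕ) (i : ℕ) :
    eFrom i (L ++ [0]) = eFrom i L + (i + L.length) := by
  induction L generalizing i with
  | nil => simp [eFrom]
  | cons t L ih =>
    simp only [List.cons_append, eFrom, ih, List.length_cons]
    omega

theorem eHL_two_mul (g : ℕ) : eHL (2 * g) = 2 * eHL g + g := by
  rw [eHL_eq_eFrom, eHL_eq_eFrom, Nat.bitIndices_two_mul, ← List.map_reverse, eFrom_map_succ,
    List.map_reverse, List.sum_reverse, Nat.sum_map_two_pow_bitIndices]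

theorem eHL_two_mul_add_one (g : ℕ) :
    eHL (2 * g + 1) = eHL (2 * g) + g.bitIndices.length := by
  rw [eHL_eq_eFrom, eHL_eq_eFrom, Nat.bitIndices_two_mul_add_one, Nat.bitIndices_two_mul,
    List.reverse_cons, eFrom_append_zero, List.length_reverse, List.length_map, zero_add]

theorem eHL_succ_eq_add_length_bitIndices (g : ℕ) :
    eHL (g + 1) = eHL g + g.bitIndices.length := by
  induction g using Nat.evenOddRec with
  | h0 => simp [eHL_eq_eFrom, eFrom]
  | h_even n _ => rw [eHL_two_mul_add_one, Nat.bitIndices_two_mul, List.length_map]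
  | h_odd n ih =>
    rw [show 2 * n + 1 + 1 = 2 * (n + 1) by ring, eHL_two_mul, ih, eHL_two_mul_add_one,
      eHL_two_mul, Nat.bitIndices_two_mul_add_one, List.length_cons, List.length_map]
    ring

theorem eHL_succ_general (g : ℕ) :
    eHL (g + 1) = eHL g + (expList g).length := by
  rw [expList_eq_reverse_bitIndices, List.length_reverse]
  exact eHL_succ_eq_add_length_bitIndices g

/-- `e (g+1) = e g + s + 1`, where `s + 1` is the number of `1`-bits of `g`,
i.e. the length of the binary expansion `g = Σ_{i=0}^{s} 2^(t_i)`. -/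
theorem eHL_succ (g : ℕ) (hg : 0 < g) :
    eHL (g + 1) = eHL g + (expList g).length :=
  eHL_succ_general g
end

section
/- Let n ≥ 8, t_0 = n − 2, and m be any integer with 2^{n−2} ≤ m < 2^{n−1}. Then n·m − 2·e(m) ≥ (n − t_0)·2^{t_0} > (3n/4)·2^{⌈n/2⌉} ≥ n·2^{⌈n/2⌉} − e(2^{⌈n/2⌉}), where e is the function e(g) = Σ t_i·2^{t_i−1} + Σ i·2^{t_i} defined via the binary expansion of g. -/
theorem Nat.bitIndices_two_pow_add {t r : ℕ} (h : r < 2 ^ t) :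
    (2 ^ t + r).bitIndices = r.bitIndices ++ [t] := by
  have hsorted : (r.bitIndices ++ [t]).SortedLT := by
    rw [List.sortedLT_iff_pairwise, List.pairwise_append]
    refine ⟨Nat.bitIndices_sorted.pairwise, List.pairwise_singleton _ _, ?_⟩
    rintro a ha b hb
    rw [List.mem_singleton] at hb
    subst hb
    exact (Nat.pow_lt_pow_iff_right (by norm_num)).1
      ((Nat.two_pow_le_of_mem_bitIndices ha).trans_lt h)
  conv_lhs => rw [← Nat.sum_map_two_pow_bitIndices r, add_comm]
  simpa using Nat.bitIndices_sum_map_two_pow hsorted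

theorem expList_two_pow_add {t r : ℕ} (h : r < 2 ^ t) :
    expList (2 ^ t + r) = t :: expList r := by
  simp [expList_eq_reverse_bitIndices, Nat.bitIndices_two_pow_add h]

theorem sum_map_two_pow_expList (g : ℕ) : ((expList g).map (2 ^ ·)).sum = g := by
  simp [expList_eq_reverse_bitIndices, List.sum_reverse]

theorem List.sum_map_zipIdx_succ_add_mul {α : Type*} (a b : α → ℕ) (L : List α) (i : ℕ) :
    ((L.zipIdx (i + 1)).map (fun p => a p.1 + p.2 * b p.1)).sum =
      ((L.zipIdx i).map (fun p => a p.1 + p.2 * b p.1)).sum + (L.map b).sum := by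
  conv_rhs => arg 2; rw [← List.zipIdx_map_fst i L, List.map_map]
  rw [← List.sum_map_add, List.zipIdx_succ, List.map_map]
  congr 1
  apply List.map_congr_left
  intro p _
  simp only [Function.comp_apply]
  ring

theorem eHL_two_pow_add {t r : ℕ} (h : r < 2 ^ t) :
    eHL (2 ^ t + r) = t * 2 ^ (t - 1) + eHL r + r := by
  rw [eHL, expList_two_pow_add h, List.zipIdx_cons, List.map_cons, List.sum_cons,
    List.sum_map_zipIdx_succ_add_mul (fun t => t * 2 ^ (t - 1)) (2 ^ ·),
    sum_map_two_pow_expList, eHL]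
  ring

theorem eHL_two_pow (k : ℕ) : eHL (2 ^ k) = k * 2 ^ (k - 1) := by
  simp [eHL, expList_eq_reverse_bitIndices]

theorem two_mul_eHL_two_pow (k : ℕ) : 2 * eHL (2 ^ k) = k * 2 ^ k := by
  rw [eHL_two_pow, two_mul_mul_two_pow_sub_one]

theorem two_mul_eHL_le_mul {t g : ℕ} (h : g < 2 ^ t) : 2 * eHL g ≤ t * g := by
  induction t generalizing g with
  | zero => simp_all [eHL, expList_eq_reverse_bitIndices]
  | succ t ih =>
    by_cases hg : g < 2 ^ t
    · exact (ih hg).trans (Nat.mul_le_mul_right g t.le_succ)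
    obtain ⟨r, rfl⟩ := Nat.exists_eq_add_of_le (not_lt.1 hg)
    have hr : r < 2 ^ t := by rw [pow_succ] at h; omega
    rw [eHL_two_pow_add hr, mul_add, mul_add, two_mul_mul_two_pow_sub_one]
    nlinarith [ih hr]

theorem two_mul_eHL_add_le {t m : ℕ} (h₁ : 2 ^ t ≤ m) (h₂ : m < 2 ^ (t + 1)) :
    2 * eHL m + 2 * 2 ^ t ≤ (t + 2) * m := by
  obtain ⟨r, rfl⟩ := Nat.exists_eq_add_of_le h₁
  have hr : r < 2 ^ t := by rw [pow_succ] at h₂; omega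
  rw [eHL_two_pow_add hr, mul_add, mul_add, two_mul_mul_two_pow_sub_one]
  nlinarith [two_mul_eHL_le_mul hr]

theorem three_mul_lt_two_pow_half_add_one {n : ℕ} (hn : 8 ≤ n) : 3 * n < 2 ^ (n / 2 + 1) := by
  have hpow : 2 ^ (n / 2 + 1) = 32 * 2 ^ (n / 2 - 4) := by
    rw [show n / 2 + 1 = 5 + (n / 2 - 4) by omega, pow_add]; rfl
  have := (n / 2 - 4).lt_two_pow_self
  omega

theorem three_mul_mul_two_pow_lt {n : ℕ} (hn : 8 ≤ n) :
    3 * n * 2 ^ ((n + 1) / 2) < 8 * 2 ^ (n - 2) := calc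
  3 * n * 2 ^ ((n + 1) / 2) < 2 ^ (n / 2 + 1) * 2 ^ ((n + 1) / 2) :=
    Nat.mul_lt_mul_of_pos_right (three_mul_lt_two_pow_half_add_one hn) (by positivity)
  _ = 8 * 2 ^ (n - 2) := by
    rw [← pow_add, show n / 2 + 1 + (n + 1) / 2 = 3 + (n - 2) by omega, pow_add]; rfl

theorem case1_chain (n m : ℕ) (hn : 8 ≤ n) (h₁ : 2 ^ (n - 2) ≤ m) (h₂ : m < 2 ^ (n - 1)) :
    ((n : ℚ) * m - 2 * eHL m ≥ ((n : ℚ) - (n - 2 : ℕ)) * 2 ^ (n - 2)) ∧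
    (((n : ℚ) - (n - 2 : ℕ)) * 2 ^ (n - 2) > (3 * (n : ℚ) / 4) * 2 ^ ((n + 1) / 2)) ∧
    ((3 * (n : ℚ) / 4) * 2 ^ ((n + 1) / 2) ≥
      (n : ℚ) * 2 ^ ((n + 1) / 2) - eHL (2 ^ ((n + 1) / 2))) := by
  have htwo : (n : ℚ) - (n - 2 : ℕ) = 2 := by
    push_cast [Nat.cast_sub (by omega : 2 ≤ n)]; ring
  have hfirst : (2 * eHL m + 2 * 2 ^ (n - 2) : ℚ) ≤ n * m := by
    have := two_mul_eHL_add_le h₁ (by rwa [show n - 2 + 1 = n - 1 by omega])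
    rw [Nat.sub_add_cancel (by omega : 2 ≤ n)] at this
    exact_mod_cast this
  have hsecond : (3 * n * 2 ^ ((n + 1) / 2) : ℚ) < 8 * 2 ^ (n - 2) :=
    mod_cast three_mul_mul_two_pow_lt hn
  have hthird : (n * 2 ^ ((n + 1) / 2) : ℚ) ≤ 2 * (2 * eHL (2 ^ ((n + 1) / 2))) := by
    have : n * 2 ^ ((n + 1) / 2) ≤ 2 * (2 * eHL (2 ^ ((n + 1) / 2))) := by
      rw [two_mul_eHL_two_pow, ← mul_assoc]
      exact Nat.mul_le_mul_right _ (by omega)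
    exact_mod_cast this
  rw [htwo]
  refine ⟨?_, ?_, ?_⟩ <;> linarith
end
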